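/- arXiv:2301.09139 — 2 statements merged into one kernel-verified Lean document; each statement's English description precedes it below -/
import Mathlib

section
/- Let R be a prime ring of characteristic different from 2, let ξ, ζ ∈ R, and let (D₁, d₁) and (D₂, d₂) be generalized derivations on R such that the pair (D₁² + D₁∘D₂, d₁² + d₁∘d₂) is a generalized derivation on R. If D₂ is the inner generalized derivation F_{ξ,ζ} : r ↦ ζr + rξ (so that d₂ is the inner derivation t ↦ tξ − ξt) and D₁ ≠ 0, then either D₁ = −F_{ξ,ζ} (and d₁ = −d₂), or ξ lies in the center Z(R) of R. -/
/-- An additive map `d : R → R` with `d (x*y) = d x * y + x * d y` is a derivation. -/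
def IsDerivation {R : Type*} [Ring R] (d : R → R) : Prop :=
  (∀ x y, d (x + y) = d x + d y) ∧ (∀ x y, d (x * y) = d x * y + x * d y)

/-- A generalized derivation `(D, d)`: `D` additive, `d` a derivation, and
`D (x*y) = D x * y + x * d y`. -/
def IsGenDerivation {R : Type*} [Ring R] (D d : R → R) : Prop :=
  (∀ x y, D (x + y) = D x + D y) ∧ IsDerivation d ∧ (∀ x y, D (x * y) = D x * y + x * d y)

/-
Expanding `(D₁² + D₁D₂)(xy)` with the product rules of `D₁` and `D₂` and comparing with the
product rule of the composite leaves the identity `D₁ x (d₁ y + d₂ y) + (D₁ x + D₂ x) d₁ y = 0`.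
The derivations satisfy the same identity, and substituting `yx` for `x` turns it into
`u r v + v r u = 0` for all `r`, with `u = d₁ y + d₂ y`, `v = d₁ y`. In a prime ring of
characteristic ≠ 2 this forces `u = 0` or `v = 0`, and since an additive group is not the union
of two proper subgroups, `d₁ + d₂ = 0` or `d₁ = 0`. Feeding either alternative back into the
identity for `D₁` gives `(D₁ + D₂) · d₁ = 0` or `D₁ · d₂ = 0`, and primeness finishes the job:
`d₂ = 0` means `ξ` is central, `D₁ = 0` is excluded, and otherwise `D₁ = -D₂`.
-/

def IsPrimeRing (R : Type*) [Ring R] : Prop :=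
  ∀ x y : R, (∀ r : R, x * r * y = 0) → x = 0 ∨ y = 0

section

variable {R : Type*} [Ring R]

theorem IsDerivation.isGenDerivation {d : R → R} (hd : IsDerivation d) :
    IsGenDerivation d d :=
  ⟨hd.1, hd, hd.2⟩

/-- Herstein's lemma. -/
theorem IsPrimeRing.eq_zero_or_eq_zero_of_mul_mul_add_mul_mul_eq_zero (hR : IsPrimeRing R)
    (hchar : ∀ x : R, 2 * x = 0 → x = 0) {a b : R} (hab : ∀ x : R, a * x * b + b * x * a = 0) :
    a = 0 ∨ b = 0 := by
  refine or_iff_not_imp_right.mpr fun hb => ?_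
  have hcomm : ∀ y : R, b * y * a = a * y * b := by
    intro y
    have hsand : ∀ x, b * x * (b * y * a - a * y * b) = 0 := by
      intro x
      calc b * x * (b * y * a - a * y * b)
          = (a * (x * b * y) * b + b * (x * b * y) * a) - (a * x * b + b * x * a) * (y * b) := by
            noncomm_ring
        _ = 0 := by rw [hab, hab, zero_mul, sub_zero]
    exact sub_eq_zero.mp ((hR b _ hsand).resolve_left hb)
  have hzero : ∀ y : R, a * y * b = 0 := fun y =>
    hchar _ (by rw [two_mul, ← hab y, hcomm])
  exact (hR a b hzero).resolve_right hb

theorem IsPrimeRing.eq_zero_or_eq_zero_of_forall_mul_eq_zero (hR : IsPrimeRing R)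
    {d : R → R} (hd : ∀ x y, d (x * y) = d x * y + x * d y) {a : R} (ha : ∀ y, a * d y = 0) :
    a = 0 ∨ d = 0 := by
  refine or_iff_not_imp_right.mpr fun hd₀ => ?_
  obtain ⟨y, hy⟩ : ∃ y, d y ≠ 0 := by
    by_contra! h
    exact hd₀ (funext h)
  refine (hR a (d y) fun r => ?_).resolve_right hy
  have := ha (r * y)
  rwa [hd, mul_add, ← mul_assoc, ha, zero_mul, zero_add, ← mul_assoc] at this

end

theorem forall_eq_zero_or_forall_eq_zero {G H : Type*} [AddGroup G] [AddGroup H] {f g : G → H}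
    (hf : ∀ x y, f (x + y) = f x + f y) (hg : ∀ x y, g (x + y) = g x + g y)
    (hfg : ∀ x, f x = 0 ∨ g x = 0) : (∀ x, f x = 0) ∨ ∀ x, g x = 0 := by
  by_contra! h
  obtain ⟨⟨a, ha⟩, ⟨b, hb⟩⟩ := h
  have hga : g a = 0 := (hfg a).resolve_left ha
  have hfb : f b = 0 := (hfg b).resolve_right hb
  rcases hfg (a + b) with hab | hab
  · exact ha (by rwa [hf, hfb, add_zero] at hab)
  · exact hb (by rwa [hg, hga, zero_add] at hab)

section

variable {R : Type*} [Ring R] {D₁ d₁ D₂ d₂ : R → R}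

theorem IsGenDerivation.mul_add_mul_eq_zero_of_comp (h₁ : IsGenDerivation D₁ d₁)
    (h₂ : IsGenDerivation D₂ d₂)
    (h : IsGenDerivation (fun x => D₁ (D₁ x) + D₁ (D₂ x)) (fun x => d₁ (d₁ x) + d₁ (d₂ x)))
    (x y : R) : D₁ x * (d₁ y + d₂ y) + (D₁ x + D₂ x) * d₁ y = 0 := by
  obtain ⟨hD₁add, -, hD₁mul⟩ := h₁
  have e := h.2.2 x y
  simp only [hD₁mul, h₂.2.2, hD₁add] at e
  calc D₁ x * (d₁ y + d₂ y) + (D₁ x + D₂ x) * d₁ y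
      = (D₁ (D₁ x) * y + D₁ x * d₁ y + (D₁ x * d₁ y + x * d₁ (d₁ y))
          + (D₁ (D₂ x) * y + D₂ x * d₁ y + (D₁ x * d₂ y + x * d₁ (d₂ y))))
        - ((D₁ (D₁ x) + D₁ (D₂ x)) * y + x * (d₁ (d₁ y) + d₁ (d₂ y))) := by noncomm_ring
    _ = 0 := sub_eq_zero_of_eq e

theorem mul_mul_add_mul_mul_eq_zero_of_derivation_identity
    (hd₁ : ∀ x y, d₁ (x * y) = d₁ x * y + x * d₁ y) (hd₂ : ∀ x y, d₂ (x * y) = d₂ x * y + x * d₂ y)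
    (hid : ∀ x y : R, d₁ x * (d₁ y + d₂ y) + (d₁ x + d₂ x) * d₁ y = 0) (y x : R) :
    (d₁ y + d₂ y) * x * d₁ y + d₁ y * x * (d₁ y + d₂ y) = 0 := by
  have e := hid (y * x) y
  rw [hd₁, hd₂] at e
  calc (d₁ y + d₂ y) * x * d₁ y + d₁ y * x * (d₁ y + d₂ y)
      = ((d₁ y * x + y * d₁ x) * (d₁ y + d₂ y)
          + (d₁ y * x + y * d₁ x + (d₂ y * x + y * d₂ x)) * d₁ y)
        - y * (d₁ x * (d₁ y + d₂ y) + (d₁ x + d₂ x) * d₁ y) := by noncomm_ring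
    _ = 0 := by rw [e, hid, mul_zero, sub_zero]

end

theorem stmt12 {R : Type*} [Ring R]
    (hprime : ∀ x y : R, (∀ r : R, x * r * y = 0) → x = 0 ∨ y = 0)
    (hchar : ∀ x : R, 2 * x = 0 → x = 0)
    (ξ ζ : R) (D₁ d₁ D₂ d₂ : R → R)
    (h₁ : IsGenDerivation D₁ d₁) (h₂ : IsGenDerivation D₂ d₂)
    (h : IsGenDerivation (fun x => D₁ (D₁ x) + D₁ (D₂ x)) (fun x => d₁ (d₁ x) + d₁ (d₂ x)))
    (hD₂ : D₂ = fun r => ζ * r + r * ξ) (hd₂ : d₂ = fun t => t * ξ - ξ * t)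
    (hD₁ne : D₁ ≠ 0) :
    ((D₁ = fun r => -(ζ * r + r * ξ)) ∧ d₁ = -d₂) ∨ ξ ∈ Set.center R := by
  have hR : IsPrimeRing R := hprime
  have key := h₁.mul_add_mul_eq_zero_of_comp h₂ h
  have hsand := mul_mul_add_mul_mul_eq_zero_of_derivation_identity h₁.2.1.2 h₂.2.1.2
    (h₁.2.1.isGenDerivation.mul_add_mul_eq_zero_of_comp h₂.2.1.isGenDerivation
      h.2.1.isGenDerivation)
  by_cases hd₂0 : d₂ = 0
  · refine Or.inr (Semigroup.mem_center_iff.mpr fun t => sub_eq_zero.mp ?_)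
    simpa [hd₂] using congrFun hd₂0 t
  rcases forall_eq_zero_or_forall_eq_zero (fun x y => by rw [h₁.2.1.1, h₂.2.1.1]; abel)
      h₁.2.1.1 fun y => hR.eq_zero_or_eq_zero_of_mul_mul_add_mul_mul_eq_zero hchar (hsand y) with
    hsum | hd₁0
  · have hd₁ : d₁ = -d₂ := funext fun y => eq_neg_of_add_eq_zero_left (hsum y)
    have hd₁ne : d₁ ≠ 0 := by rwa [hd₁, neg_ne_zero]
    have hD : ∀ x, D₁ x + D₂ x = 0 := fun x =>
      (hR.eq_zero_or_eq_zero_of_forall_mul_eq_zero h₁.2.1.2 fun y => by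
        simpa [hsum] using key x y).resolve_right hd₁ne
    refine Or.inl ⟨funext fun x => ?_, hd₁⟩
    simpa [hD₂] using eq_neg_of_add_eq_zero_left (hD x)
  · exact absurd (funext fun x => (hR.eq_zero_or_eq_zero_of_forall_mul_eq_zero h₂.2.1.2
      fun y => by simpa [hd₁0] using key x y).resolve_right hd₂0) hD₁ne
end

section
/- Let R be a prime ring of characteristic different from 2, let ξ ∈ R, and let (D₁, d₁) and (D₂, d₂) be generalized derivations on R such that the pair (D₁² + D₁∘D₂, d₁² + d₁∘d₂) is a generalized derivation on R. If D₁ is the right multiplication map R_ξ : r ↦ rξ (so that d₁ is the inner derivation t ↦ tξ − ξt), then either D₂ = R_{−ξ} (with d₂ = −d₁), or ξ lies in the center Z(R) of R. -/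
/-!
Write `[y, ξ] := yξ - ξy` and `a := D₂ 1`, so that `D₂ = L_a + d₂`. Expanding the product rule
of `D₁² + D₁D₂` with `D₁ = R_ξ` gives `D₂(x)[y, ξ] + 2xξ[y, ξ] + xξ d₂(y) = 0`. Subtracting `x`
times its instance at `x = 1` shows that the derivation `g := [a, ·] + d₂` satisfies
`g(x)[y, ξ] = 0`; if `ξ` is not central, primeness gives `g = 0`, i.e. `d₂ = [·, a]`. Then
`b := a + ξ` satisfies `b[y, ξ] = ξ[b, y]`, which linearizes to
`[b, t]u[z, ξ] + [t, ξ]u[b, z] = 0`; primeness and `char R ≠ 2` force `b` to be central, and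
then `b = 0`, that is `D₂ = R_{-ξ}`.
-/
section PrimeRing

variable {R : Type*} [Ring R]

lemma eq_zero_of_leibniz_mul_eq_zero
    (hprime : ∀ x y : R, (∀ r : R, x * r * y = 0) → x = 0 ∨ y = 0)
    {g : R → R} (hg : ∀ x y, g (x * y) = g x * y + x * g y)
    {c : R} (hc : c ≠ 0) (h : ∀ x, g x * c = 0) (x : R) : g x = 0 := by
  refine (hprime _ _ fun r => ?_).resolve_right hc
  have hxr := h (x * r)
  rwa [hg, add_mul, mul_assoc x, h r, mul_zero, add_zero] at hxr

lemma eq_zero_or_eq_zero_of_mul_mul_add_mul_mul_eq_zero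
    (hprime : ∀ x y : R, (∀ r : R, x * r * y = 0) → x = 0 ∨ y = 0)
    (hchar : ∀ x : R, 2 * x = 0 → x = 0)
    {f g : R → R} (h : ∀ t u z, f t * u * g z + g t * u * f z = 0) : f = 0 ∨ g = 0 := by
  by_cases hg : g = 0
  · exact Or.inr hg
  obtain ⟨t, ht⟩ := Function.ne_iff.mp hg
  refine Or.inl (funext fun z => ?_)
  have hsq : ∀ w, f z * w * f z = 0 := fun w =>
    (hprime (g t) _ fun u => hchar _ (by
      -- the left-hand side of this combination is `2 * (g t * u * (f z * w * f z))`
      linear_combination (norm := noncomm_ring)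
        h t (u * f z * w) z - f t * u * h z w z + h t u z * (w * f z))).resolve_left ht
  exact or_self_iff.mp (hprime _ _ hsq)

lemma eq_zero_of_forall_mul_lie_eq_mul_lie
    (hprime : ∀ x y : R, (∀ r : R, x * r * y = 0) → x = 0 ∨ y = 0)
    (hchar : ∀ x : R, 2 * x = 0 → x = 0)
    {b ξ y₀ : R} (hy₀ : ⁅y₀, ξ⁆ ≠ 0) (h : ∀ y, b * ⁅y, ξ⁆ = ξ * ⁅b, y⁆) : b = 0 := by
  have hmul : ∀ y z, b * y * ⁅z, ξ⁆ = ξ * y * ⁅b, z⁆ := fun y z => by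
    linear_combination (norm := (simp only [Ring.lie_def]; noncomm_ring)) h (y * z) - h y * z
  have hlin : ∀ t u z, ⁅b, t⁆ * u * ⁅z, ξ⁆ + ⁅t, ξ⁆ * u * ⁅b, z⁆ = 0 := fun t u z => by
    linear_combination (norm := (simp only [Ring.lie_def]; noncomm_ring))
      hmul (t * u) z - t * hmul u z
  have hb : (fun t => ⁅b, t⁆) = 0 :=
    (eq_zero_or_eq_zero_of_mul_mul_add_mul_mul_eq_zero hprime hchar hlin).resolve_right
      fun h0 => hy₀ (congrFun h0 y₀)
  refine (hprime b _ fun t => ?_).resolve_right hy₀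
  rw [hmul, congrFun hb y₀, Pi.zero_apply, mul_zero]

end PrimeRing

section GeneralizedDerivation

variable {R : Type*} [Ring R]

lemma apply_eq_apply_one_mul_add {D d : R → R} (hD : ∀ x y, D (x * y) = D x * y + x * d y)
    (y : R) : D y = D 1 * y + d y := by
  simpa using hD 1 y

lemma product_rule_identity {ξ : R} {D d : R → R}
    (hD : ∀ x y, D (x * y) = D x * y + x * d y)
    (hF : ∀ x y, x * y * ξ * ξ + D (x * y) * ξ =
      (x * ξ * ξ + D x * ξ) * y + x * (⁅⁅y, ξ⁆, ξ⁆ + ⁅d y, ξ⁆)) (x y : R) :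
    D x * ⁅y, ξ⁆ + 2 * (x * (ξ * ⁅y, ξ⁆)) + x * (ξ * d y) = 0 := by
  linear_combination (norm := (simp only [Ring.lie_def]; noncomm_ring)) hF x y - hD x y * ξ

lemma eq_lie_of_product_rule_identity
    (hprime : ∀ x y : R, (∀ r : R, x * r * y = 0) → x = 0 ∨ y = 0)
    {ξ y₀ : R} (hy₀ : ⁅y₀, ξ⁆ ≠ 0) {D d : R → R}
    (hD : ∀ x y, D (x * y) = D x * y + x * d y) (hd : ∀ x y, d (x * y) = d x * y + x * d y)
    (hid : ∀ x y, D x * ⁅y, ξ⁆ + 2 * (x * (ξ * ⁅y, ξ⁆)) + x * (ξ * d y) = 0) (x : R) :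
    d x = ⁅x, D 1⁆ := by
  have hg : ∀ x y, ⁅D 1, x * y⁆ + d (x * y) = (⁅D 1, x⁆ + d x) * y + x * (⁅D 1, y⁆ + d y) :=
    fun x y => by rw [hd]; simp only [Ring.lie_def]; noncomm_ring
  have hg₀ := eq_zero_of_leibniz_mul_eq_zero hprime (g := fun x => ⁅D 1, x⁆ + d x) hg hy₀
    (fun x => by
      linear_combination (norm := (simp only [Ring.lie_def]; noncomm_ring))
        hid x y₀ - x * hid 1 y₀ - apply_eq_apply_one_mul_add hD x * ⁅y₀, ξ⁆) x
  linear_combination (norm := (simp only [Ring.lie_def]; noncomm_ring)) hg₀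

end GeneralizedDerivation

theorem stmt15_general {R : Type*} [Ring R]
    (hprime : ∀ x y : R, (∀ r : R, x * r * y = 0) → x = 0 ∨ y = 0)
    (hchar : ∀ x : R, 2 * x = 0 → x = 0)
    (ξ : R) (D₁ d₁ D₂ d₂ : R → R)
    (h₂ : IsGenDerivation D₂ d₂)
    (h : IsGenDerivation (fun x => D₁ (D₁ x) + D₁ (D₂ x)) (fun x => d₁ (d₁ x) + d₁ (d₂ x)))
    (hD₁ : D₁ = fun r => r * ξ) (hd₁ : d₁ = fun t => t * ξ - ξ * t) :
    ((D₂ = fun r => r * (-ξ)) ∧ d₂ = -d₁) ∨ ξ ∈ Set.center R := by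
  subst hD₁ hd₁
  obtain ⟨-, ⟨-, hd₂⟩, hD₂⟩ := h₂
  by_cases hξ : ξ ∈ Set.center R
  · exact Or.inr hξ
  obtain ⟨y₀, hy₀⟩ : ∃ y₀ : R, ⁅y₀, ξ⁆ ≠ 0 := by
    simpa [Semigroup.mem_center_iff, Ring.lie_def, sub_eq_zero] using hξ
  have hid := product_rule_identity hD₂ h.2.2
  have hd₂_eq := eq_lie_of_product_rule_identity hprime hy₀ hD₂ hd₂ hid
  have hb : D₂ 1 + ξ = 0 := eq_zero_of_forall_mul_lie_eq_mul_lie hprime hchar hy₀ fun y => by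
    linear_combination (norm := (simp only [Ring.lie_def]; noncomm_ring))
      hid 1 y - ξ * hd₂_eq y
  have ha : D₂ 1 = -ξ := eq_neg_of_add_eq_zero_left hb
  refine Or.inl ⟨funext fun r => ?_, funext fun t => ?_⟩
  · rw [apply_eq_apply_one_mul_add hD₂, hd₂_eq, ha, Ring.lie_def]; noncomm_ring
  · rw [hd₂_eq, ha, Ring.lie_def, Pi.neg_apply]; noncomm_ring

theorem stmt15 {R : Type*} [Ring R]
    (hprime : ∀ x y : R, (∀ r : R, x * r * y = 0) → x = 0 ∨ y = 0)
    (hchar : ∀ x : R, 2 * x = 0 → x = 0)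
    (ξ : R) (D₁ d₁ D₂ d₂ : R → R)
    (h₁ : IsGenDerivation D₁ d₁) (h₂ : IsGenDerivation D₂ d₂)
    (h : IsGenDerivation (fun x => D₁ (D₁ x) + D₁ (D₂ x)) (fun x => d₁ (d₁ x) + d₁ (d₂ x)))
    (hD₁ : D₁ = fun r => r * ξ) (hd₁ : d₁ = fun t => t * ξ - ξ * t) :
    ((D₂ = fun r => r * (-ξ)) ∧ d₂ = -d₁) ∨ ξ ∈ Set.center R :=
  stmt15_general hprime hchar ξ D₁ d₁ D₂ d₂ h₂ h hD₁ hd₁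
end
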